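/- Single-event utility-invariant support (Corollary): in the single-event problem, let U be admissible with derivative U', and let (c, g) be a feasible portfolio with c > 0 that maximizes ∑_i p i · U(c + g i) over all feasible portfolios. Let A = {i : g i > 0} and suppose A is a proper subset of the outcomes. Then Q_A < 1, the identity (∑_i p i · U'(c + g i)) · (1 − Q_A) = (1 − P_A) · U'(c) holds, and A = {i : p i / π i > (1 − P_A) / (1 − Q_A)}; in particular this characterization of the active set does not involve U. -/

import Mathlib

open Finset

def FeasibleSingle {n : ℕ} (π : Fin n → ℝ) (c : ℝ) (g : Fin n → ℝ) : Prop :=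
  0 ≤ c ∧ (∀ i, 0 ≤ g i) ∧ (c + ∑ i, π i * g i = 1) ∧ ∀ i, 0 < c + g i

def Admissible (U U' : ℝ → ℝ) : Prop :=
  (∀ w : ℝ, 0 < w → HasDerivAt U (U' w) w) ∧ (∀ w : ℝ, 0 < w → 0 < U' w) ∧
    StrictAntiOn U' (Set.Ioi 0)

/-!
Move `t` units of cash into the wager on outcome `i`, i.e. buy `t / π i` more of it. At an
optimum with `c > 0` this is feasible for small `t ≥ 0`, and also for small `t < 0` when
`g i > 0`, so the first-order conditions read `p i U'(c + g i) / π i ≤ λ` with equality on the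
active set `A`, where `λ = ∑ p k U'(c + g k)`. Off `A` the wealth is `c`, so summing these gives
`λ (1 - Q_A) = (1 - P_A) U'(c)`, and the threshold `(1 - P_A) / (1 - Q_A)` is `λ / U'(c)`. Since
`U'` is strictly decreasing, `p i / π i = λ / U'(c + g i)` exceeds it exactly when `g i > 0`.
-/

open Filter Topology

theorem HasDerivAt.nonpos_of_isLocalMaxOn_Ici {f : ℝ → ℝ} {f' a : ℝ} (hf : HasDerivAt f f' a)
    (h : IsLocalMaxOn f (Set.Ici a) a) : f' ≤ 0 := by
  have hone : (1 : ℝ) ∈ posTangentConeAt (Set.Ici a) a :=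
    one_mem_posTangentConeAt_iff_frequently.2
      (eventually_nhdsWithin_of_forall (s := Set.Ioi a) fun _ hx =>
        Set.Ioi_subset_Ici_self hx).frequently
  simpa using h.hasFDerivWithinAt_nonpos hf.hasDerivWithinAt.hasFDerivWithinAt hone

section SingleEvent

variable {n : ℕ} {p π : Fin n → ℝ} {U U' : ℝ → ℝ} {c : ℝ} {g : Fin n → ℝ}

def expectedUtility (p : Fin n → ℝ) (U : ℝ → ℝ) (c : ℝ) (g : Fin n → ℝ) : ℝ :=
  ∑ i, p i * U (c + g i)

def IsOptimal (p π : Fin n → ℝ) (U : ℝ → ℝ) (c : ℝ) (g : Fin n → ℝ) : Prop :=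
  ∀ c' g', FeasibleSingle π c' g' → expectedUtility p U c' g' ≤ expectedUtility p U c g

noncomputable def wagerShift (π g : Fin n → ℝ) (i : Fin n) (t : ℝ) : Fin n → ℝ :=
  g + Pi.single i (t / π i)

@[simp]
theorem wagerShift_zero (π g : Fin n → ℝ) (i : Fin n) : wagerShift π g i 0 = g := by
  simp [wagerShift]

theorem sum_mul_wagerShift (π g : Fin n → ℝ) (i : Fin n) (t : ℝ) :
    ∑ k, π k * wagerShift π g i t k = ∑ k, π k * g k + π i * (t / π i) := by
  simp [wagerShift, mul_add, sum_add_distrib, Pi.single_apply]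

theorem hasDerivAt_wealth_wagerShift (π : Fin n → ℝ) (c : ℝ) (g : Fin n → ℝ) (i k : Fin n)
    (t : ℝ) :
    HasDerivAt (fun t => c - t + wagerShift π g i t k)
      ((Pi.single i (π i)⁻¹ : Fin n → ℝ) k - 1) t := by
  rcases eq_or_ne k i with rfl | hki
  · have h : HasDerivAt (fun t => c - t + (g k + t * (π k)⁻¹)) (-1 + (π k)⁻¹) t :=
      ((hasDerivAt_id' t).const_sub c).add ((hasDerivAt_mul_const (π k)⁻¹).const_add (g k))
    simpa [wagerShift, div_eq_mul_inv, neg_add_eq_sub] using h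
  · simpa [wagerShift, hki] using (hasDerivAt_id t).const_sub c

theorem eventually_feasible_wagerShift (hfeas : FeasibleSingle π c g) (hc : 0 < c) {i : Fin n}
    (hπi : 0 < π i) :
    ∀ᶠ t in 𝓝 0, -(π i * g i) ≤ t → FeasibleSingle π (c - t) (wagerShift π g i t) := by
  obtain ⟨-, hg, hbudget, hwealth⟩ := hfeas
  have hwealth' : ∀ᶠ t in 𝓝 0, ∀ k, 0 < c - t + wagerShift π g i t k :=
    eventually_all.2 fun k =>
      (hasDerivAt_wealth_wagerShift π c g i k 0).continuousAt.eventually_const_lt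
        (by simpa using hwealth k)
  filter_upwards [eventually_lt_nhds hc, hwealth'] with t htc htwealth hti
  refine ⟨by linarith, fun k => ?_, ?_, htwealth⟩
  · rcases eq_or_ne k i with rfl | hki
    · have h : g k + t / π k = (π k * g k + t) / π k := by field_simp
      simpa [wagerShift, h] using div_nonneg (by linarith) hπi.le
    · simpa [wagerShift, hki] using hg k
  · rw [sum_mul_wagerShift, mul_div_cancel₀ _ hπi.ne']
    linarith

theorem hasDerivAt_expectedUtility_wagerShift (hU : ∀ k, HasDerivAt U (U' (c + g k)) (c + g k))
    (i : Fin n) :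
    HasDerivAt (fun t => expectedUtility p U (c - t) (wagerShift π g i t))
      (p i * U' (c + g i) / π i - expectedUtility p U' c g) 0 := by
  have h : ∀ k ∈ univ, HasDerivAt (fun t => p k * U (c - t + wagerShift π g i t k))
      (p k * (U' (c + g k) * ((Pi.single i (π i)⁻¹ : Fin n → ℝ) k - 1))) 0 := fun k _ =>
    ((hU k).comp_of_eq 0 (hasDerivAt_wealth_wagerShift π c g i k 0) (by simp)).const_mul _
  refine (HasDerivAt.fun_sum h).congr_deriv ?_
  simp [expectedUtility, mul_sub, sum_sub_distrib, Pi.single_apply, div_eq_mul_inv,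
    mul_assoc]

theorem eventually_expectedUtility_wagerShift_le (hfeas : FeasibleSingle π c g) (hc : 0 < c)
    {i : Fin n} (hπi : 0 < π i) (hopt : IsOptimal p π U c g) :
    ∀ᶠ t in 𝓝 0, -(π i * g i) ≤ t →
      expectedUtility p U (c - t) (wagerShift π g i t) ≤ expectedUtility p U c g := by
  filter_upwards [eventually_feasible_wagerShift hfeas hc hπi] with t ht hti
    using hopt _ _ (ht hti)

theorem div_le_expectedUtility_of_isOptimal (hfeas : FeasibleSingle π c g) (hc : 0 < c)
    (hU : ∀ w, 0 < w → HasDerivAt U (U' w) w) (hopt : IsOptimal p π U c g)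
    {i : Fin n} (hπi : 0 < π i) :
    p i * U' (c + g i) / π i ≤ expectedUtility p U' c g := by
  have hmax :
      IsLocalMaxOn (fun t => expectedUtility p U (c - t) (wagerShift π g i t)) (Set.Ici 0) 0 := by
    filter_upwards [nhdsWithin_le_nhds (eventually_expectedUtility_wagerShift_le hfeas hc hπi hopt),
      self_mem_nhdsWithin] with t ht ht0
    simpa using ht ((neg_nonpos.2 (mul_nonneg hπi.le (hfeas.2.1 i))).trans ht0)
  have hd := hasDerivAt_expectedUtility_wagerShift (p := p) (π := π)
    (fun k => hU _ (hfeas.2.2.2 k)) i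
  linarith [hd.nonpos_of_isLocalMaxOn_Ici hmax]

theorem div_eq_expectedUtility_of_isOptimal (hfeas : FeasibleSingle π c g) (hc : 0 < c)
    (hU : ∀ w, 0 < w → HasDerivAt U (U' w) w) (hopt : IsOptimal p π U c g)
    {i : Fin n} (hπi : 0 < π i) (hgi : 0 < g i) :
    p i * U' (c + g i) / π i = expectedUtility p U' c g := by
  have hmax : IsLocalMax (fun t => expectedUtility p U (c - t) (wagerShift π g i t)) 0 := by
    filter_upwards [eventually_expectedUtility_wagerShift_le hfeas hc hπi hopt,
      eventually_gt_nhds (neg_neg_of_pos (mul_pos hπi hgi))] with t ht hti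
    simpa using ht hti.le
  have hd := hasDerivAt_expectedUtility_wagerShift (p := p) (π := π)
    (fun k => hU _ (hfeas.2.2.2 k)) i
  exact sub_eq_zero.1 (hmax.hasDerivAt_eq_zero hd)

theorem expectedUtility_mul_one_sub_sum_filter (hpsum : ∑ i, p i = 1) (hπ : ∀ i, π i ≠ 0)
    (hg : ∀ i, 0 ≤ g i)
    (hactive : ∀ i, 0 < g i → p i * U' (c + g i) / π i = expectedUtility p U' c g) :
    expectedUtility p U' c g * (1 - ∑ i ∈ univ.filter (fun i => 0 < g i), π i)
      = (1 - ∑ i ∈ univ.filter (fun i => 0 < g i), p i) * U' c := by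
  have hA : ∑ i ∈ univ.filter (fun i => 0 < g i), p i * U' (c + g i)
      = expectedUtility p U' c g * ∑ i ∈ univ.filter (fun i => 0 < g i), π i := by
    rw [mul_sum]
    refine sum_congr rfl fun i hi => ?_
    rw [← hactive i (mem_filter.1 hi).2, div_mul_cancel₀ _ (hπ i)]
  have hAc : ∑ i ∈ univ.filter (fun i => ¬0 < g i), p i * U' (c + g i)
      = (1 - ∑ i ∈ univ.filter (fun i => 0 < g i), p i) * U' c := by
    have hg0 : ∀ i ∈ univ.filter (fun i => ¬0 < g i), g i = 0 := fun i hi =>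
      le_antisymm (not_lt.1 (mem_filter.1 hi).2) (hg i)
    rw [sum_congr rfl fun i hi => by rw [hg0 i hi, add_zero], ← sum_mul, ← hpsum,
      ← sum_filter_add_sum_filter_not univ (fun i => 0 < g i) p, add_sub_cancel_left]
  have hsplit := sum_filter_add_sum_filter_not univ (fun i => 0 < g i)
    fun i => p i * U' (c + g i)
  rw [hA, hAc] at hsplit
  change _ = expectedUtility p U' c g at hsplit
  linarith

theorem pos_iff_div_lt_div_of_isOptimal (hfeas : FeasibleSingle π c g) (hc : 0 < c)
    (hU : Admissible U U') (hopt : IsOptimal p π U c g)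
    {i : Fin n} (hpi : 0 < p i) (hπi : 0 < π i) :
    0 < g i ↔ expectedUtility p U' c g / U' c < p i / π i := by
  obtain ⟨hder, hU'pos, hU'anti⟩ := hU
  have hwi := hfeas.2.2.2 i
  have hratio : p i / π i = p i * U' (c + g i) / π i / U' (c + g i) := by
    field_simp [(hU'pos _ hwi).ne']
  constructor
  · intro hgi
    rw [hratio, div_eq_expectedUtility_of_isOptimal hfeas hc hder hopt hπi hgi]
    refine div_lt_div_of_pos_left ?_ (hU'pos _ hwi) (hU'anti hc hwi (by linarith))
    rw [← div_eq_expectedUtility_of_isOptimal hfeas hc hder hopt hπi hgi]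
    exact div_pos (mul_pos hpi (hU'pos _ hwi)) hπi
  · intro hlt
    by_contra hgi
    have hgi0 : g i = 0 := le_antisymm (not_lt.1 hgi) (hfeas.2.1 i)
    rw [hratio, hgi0, add_zero] at hlt
    have hle := div_le_expectedUtility_of_isOptimal hfeas hc hder hopt hπi
    rw [hgi0, add_zero] at hle
    exact (div_le_div_of_nonneg_right hle (hU'pos c hc).le).not_gt hlt

end SingleEvent

/-- single-event utility-invariant support: at a maximizer with
positive cash whose active set `A = {i : g i > 0}` is proper, `Q_A < 1`, the identity
`E[U'] (1 - Q_A) = (1 - P_A) U'(c)` holds, and the active set is exactly the set of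
outcomes whose edge ratio exceeds `(1 - P_A)/(1 - Q_A)` — a description free of `U`. -/
theorem single_event_support {n : ℕ} (p π : Fin n → ℝ)
    (hp : ∀ i, 0 < p i) (hpsum : ∑ i, p i = 1) (hπ : ∀ i, 0 < π i)
    (U U' : ℝ → ℝ) (hU : Admissible U U')
    (c : ℝ) (g : Fin n → ℝ) (hfeas : FeasibleSingle π c g) (hc : 0 < c)
    (hopt : ∀ c' : ℝ, ∀ g' : Fin n → ℝ, FeasibleSingle π c' g' →
      ∑ i, p i * U (c' + g' i) ≤ ∑ i, p i * U (c + g i))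
    (hproper : Finset.univ.filter (fun i => 0 < g i) ≠ (Finset.univ : Finset (Fin n))) :
    (∑ i ∈ Finset.univ.filter (fun i => 0 < g i), π i) < 1
    ∧ (∑ i, p i * U' (c + g i)) * (1 - ∑ i ∈ Finset.univ.filter (fun i => 0 < g i), π i)
        = (1 - ∑ i ∈ Finset.univ.filter (fun i => 0 < g i), p i) * U' c
    ∧ Finset.univ.filter (fun i => 0 < g i)
        = Finset.univ.filter (fun i =>
            (1 - ∑ i ∈ Finset.univ.filter (fun i => 0 < g i), p i)
              / (1 - ∑ i ∈ Finset.univ.filter (fun i => 0 < g i), π i)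
            < p i / π i) := by
  have hactive := fun i => div_eq_expectedUtility_of_isOptimal hfeas hc hU.1 hopt (hπ i)
  have hident :=
    expectedUtility_mul_one_sub_sum_filter hpsum (fun i => (hπ i).ne') hfeas.2.1 hactive
  set A := univ.filter (fun i => 0 < g i)
  obtain ⟨j, -, hj⟩ := exists_of_ssubset (ssubset_univ_iff.2 hproper)
  have hP : ∑ i ∈ A, p i < 1 :=
    hpsum ▸ sum_lt_sum_of_subset (subset_univ A) (mem_univ j) hj (hp j) fun i _ _ => (hp i).le
  have hlam : 0 ≤ expectedUtility p U' c g :=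
    sum_nonneg fun i _ => mul_nonneg (hp i).le (hU.2.1 _ (hfeas.2.2.2 i)).le
  have hQ : 0 < 1 - ∑ i ∈ A, π i :=
    pos_of_mul_pos_right (hident ▸ mul_pos (by linarith) (hU.2.1 c hc)) hlam
  have hthreshold : (1 - ∑ i ∈ A, p i) / (1 - ∑ i ∈ A, π i) = expectedUtility p U' c g / U' c := by
    rw [div_eq_div_iff hQ.ne' (hU.2.1 c hc).ne', ← hident]
  refine ⟨by linarith, hident, ?_⟩
  ext i
  simp only [A, mem_filter, mem_univ, true_and, hthreshold]
  exact pos_iff_div_lt_div_of_isOptimal hfeas hc hU hopt (hp i) (hπ i)
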